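/- arXiv:2009.08208 — 6 statements merged into one kernel-verified Lean document; each statement's English description precedes it below -/
import Mathlib

section
/- Let G be a simple graph, t a timestamp function, and v a vertex. For all vertices u, w: the set {v,u,w} is a triangle of G (i.e., v, u, w are pairwise distinct and pairwise adjacent in G) if and only if all three edges {v,u}, {u,w}, {v,w} belong to T2(v). (This is the correctness core of the paper's triangle membership listing algorithm.) -/
/-- The temporal 2-hop set `T2(v)` of a vertex `v`: (i) edges of `G` incident to `v`;
(ii) for distinct `v,u,w` with `{v,u},{u,w}` edges and `t{u,w} ≥ t{v,u}`, the edges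
`{v,u}` and `{u,w}`; (iii) for distinct `v,u,w` with `{v,u},{v,w},{u,w}` edges,
`t{u,w} < t{v,u}` and `t{u,w} < t{v,w}`, the edge `{u,w}`. -/
def T2 {V : Type*} (G : SimpleGraph V) (t : Sym2 V → ℕ) (v : V) : Set (Sym2 V) :=
  {e | (e ∈ G.edgeSet ∧ v ∈ e) ∨
    (∃ u w : V, u ≠ v ∧ w ≠ v ∧ u ≠ w ∧ G.Adj v u ∧ G.Adj u w ∧
      t s(v, u) ≤ t s(u, w) ∧ (e = s(v, u) ∨ e = s(u, w))) ∨
    (∃ u w : V, u ≠ v ∧ w ≠ v ∧ u ≠ w ∧ G.Adj v u ∧ G.Adj v w ∧ G.Adj u w ∧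
      t s(u, w) < t s(v, u) ∧ t s(u, w) < t s(v, w) ∧ e = s(u, w))}

lemma T2_subset_edgeSet {V : Type*} (G : SimpleGraph V) (t : Sym2 V → ℕ) (v : V) :
    T2 G t v ⊆ G.edgeSet := by
  rintro e (⟨he, _⟩ | ⟨u, w, _, _, _, hvu, huw, _, (rfl | rfl)⟩ |
    ⟨u, w, _, _, _, _, _, huw, _, _, rfl⟩) <;>
    simp_all [SimpleGraph.mem_edgeSet]

/-- `{v,u,w}` is a triangle of `G` iff all three of its edges belong
to `T2(v)`. -/
theorem triangle_iff_edges_mem_T2 {V : Type*} (G : SimpleGraph V)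
    (t : Sym2 V → ℕ) (v : V) :
    ∀ u w : V,
      (v ≠ u ∧ v ≠ w ∧ u ≠ w ∧ G.Adj v u ∧ G.Adj u w ∧ G.Adj v w) ↔
        (s(v, u) ∈ T2 G t v ∧ s(u, w) ∈ T2 G t v ∧ s(v, w) ∈ T2 G t v) := by
  intro u w
  constructor
  · rintro ⟨hvu, hvw, huw, avu, auw, avw⟩
    refine ⟨Or.inl ⟨avu, by simp⟩, ?_, Or.inl ⟨avw, by simp⟩⟩
    rcases le_or_gt (t s(v, u)) (t s(u, w)) with h | h
    · exact Or.inr (Or.inl ⟨u, w, hvu.symm, hvw.symm, huw, avu, auw, h, Or.inr rfl⟩)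
    rcases le_or_gt (t s(v, w)) (t s(u, w)) with h2 | h2
    · refine Or.inr (Or.inl ⟨w, u, hvw.symm, hvu.symm, huw.symm, avw, auw.symm, ?_, Or.inr ?_⟩)
      · rwa [Sym2.eq_swap (a := w) (b := u)]
      · exact Sym2.eq_swap
    · exact Or.inr (Or.inr ⟨u, w, hvu.symm, hvw.symm, huw, avu, avw, auw, h, h2, rfl⟩)
  · rintro ⟨h1, h2, h3⟩
    have a1 := (SimpleGraph.mem_edgeSet G).mp (T2_subset_edgeSet G t v h1)
    have a2 := (SimpleGraph.mem_edgeSet G).mp (T2_subset_edgeSet G t v h2)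
    have a3 := (SimpleGraph.mem_edgeSet G).mp (T2_subset_edgeSet G t v h3)
    exact ⟨a1.ne, a3.ne, a2.ne, a1, a2, a3⟩
end

section
/- Let G be a simple graph, t a timestamp function, and let (v, u1, u2, u3, u4) be a 5-cycle of G. If t({u2,u3}) ≥ t({v,u1}), t({u2,u3}) ≥ t({u1,u2}), t({u2,u3}) ≥ t({u3,u4}) and t({u2,u3}) ≥ t({u4,v}), then all five cycle edges {v,u1}, {u1,u2}, {u2,u3}, {u3,u4}, {u4,v} belong to R3(v). (This is the k = 5 case in the paper's reduction of 5-cycle listing to robust 3-hop neighborhood listing.) -/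
/-- The robust 3-hop neighborhood `R3(v)` of a vertex `v`: (i) edges of `G` incident
to `v`; (ii) for distinct `v,u,w` with `{v,u},{u,w}` edges and `t{u,w} ≥ t{v,u}`, the
edges `{v,u}` and `{u,w}`; (iii) for distinct `v,u,w,x` with `{v,u},{u,w},{w,x}` edges,
`t{w,x} ≥ t{u,w}` and `t{w,x} ≥ t{v,u}`, the edges `{v,u}`, `{u,w}` and `{w,x}`. -/
def R3 {V : Type*} (G : SimpleGraph V) (t : Sym2 V → ℕ) (v : V) : Set (Sym2 V) :=
  {e | (e ∈ G.edgeSet ∧ v ∈ e) ∨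
    (∃ u w : V, u ≠ v ∧ w ≠ v ∧ u ≠ w ∧ G.Adj v u ∧ G.Adj u w ∧
      t s(v, u) ≤ t s(u, w) ∧ (e = s(v, u) ∨ e = s(u, w))) ∨
    (∃ u w x : V, u ≠ v ∧ w ≠ v ∧ x ≠ v ∧ u ≠ w ∧ u ≠ x ∧ w ≠ x ∧
      G.Adj v u ∧ G.Adj u w ∧ G.Adj w x ∧
      t s(u, w) ≤ t s(w, x) ∧ t s(v, u) ≤ t s(w, x) ∧
      (e = s(v, u) ∨ e = s(u, w) ∨ e = s(w, x)))}

/-- for a 5-cycle `(v,u1,u2,u3,u4)` whose edge `{u2,u3}` has maximal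
timestamp, all five cycle edges belong to `R3(v)`. -/
theorem fiveCycle_edges_mem_R3 {V : Type*} (G : SimpleGraph V) (t : Sym2 V → ℕ)
    (v u1 u2 u3 u4 : V)
    (hvu1 : v ≠ u1) (hvu2 : v ≠ u2) (hvu3 : v ≠ u3) (hvu4 : v ≠ u4)
    (hu12 : u1 ≠ u2) (hu13 : u1 ≠ u3) (hu14 : u1 ≠ u4)
    (hu23 : u2 ≠ u3) (hu24 : u2 ≠ u4) (hu34 : u3 ≠ u4)
    (e1 : G.Adj v u1) (e2 : G.Adj u1 u2) (e3 : G.Adj u2 u3)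
    (e4 : G.Adj u3 u4) (e5 : G.Adj u4 v)
    (ht1 : t s(v, u1) ≤ t s(u2, u3)) (ht2 : t s(u1, u2) ≤ t s(u2, u3))
    (ht3 : t s(u3, u4) ≤ t s(u2, u3)) (ht4 : t s(u4, v) ≤ t s(u2, u3)) :
    s(v, u1) ∈ R3 G t v ∧ s(u1, u2) ∈ R3 G t v ∧ s(u2, u3) ∈ R3 G t v ∧
      s(u3, u4) ∈ R3 G t v ∧ s(u4, v) ∈ R3 G t v := by
  have sw1 : s(u4, v) = s(v, u4) := Sym2.eq_swap
  have sw2 : s(u4, u3) = s(u3, u4) := Sym2.eq_swap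
  have sw3 : s(u3, u2) = s(u2, u3) := Sym2.eq_swap
  have h123 : ∀ e, (e = s(v,u1) ∨ e = s(u1,u2) ∨ e = s(u2,u3)) → e ∈ R3 G t v := by
    intro e he
    exact Or.inr (Or.inr ⟨u1, u2, u3, hvu1.symm, hvu2.symm, hvu3.symm, hu12, hu13, hu23,
      e1, e2, e3, ht2, ht1, he⟩)
  refine ⟨h123 _ (Or.inl rfl), h123 _ (Or.inr (Or.inl rfl)), h123 _ (Or.inr (Or.inr rfl)),
    ?_, ?_⟩
  · refine Or.inr (Or.inr ⟨u4, u3, u2, hvu4.symm, hvu3.symm, hvu2.symm, hu34.symm,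
      hu24.symm, hu23.symm, e5.symm, e4.symm, e3.symm, ?_, ?_, Or.inr (Or.inl sw2.symm)⟩)
    · rw [sw2, sw3]; exact ht3
    · rw [sw1.symm, sw3]; exact ht4
  · exact Or.inl ⟨(G.mem_edgeSet.mpr e5), by rw [sw1]; exact Sym2.mem_mk_left v u4⟩
end

section
/- Let G be a simple graph and t a timestamp function. For every 4-cycle of G on (a, b, c, d) there exists a vertex v ∈ {a,b,c,d} such that all four cycle edges {a,b}, {b,c}, {c,d}, {d,a} belong to R3(v). (This captures the guarantee of the paper's 4-cycle listing algorithm: every 4-cycle is seen in the robust 3-hop neighborhood of at least one of its vertices.) -/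
/-- Key lemma: if `t{c,d} ≤ t{b,c}` and `t{d,a} ≤ t{b,c}`, then all four cycle edges
lie in `R3(a)`, via the incident edge `{a,b}` and the 3-path `a-d-c-b`. -/
lemma key_R3 {V : Type*} (G : SimpleGraph V) (t : Sym2 V → ℕ) (a b c d : V)
    (hab : a ≠ b) (hac : a ≠ c) (had : a ≠ d)
    (hbc : b ≠ c) (hbd : b ≠ d) (hcd : c ≠ d)
    (e1 : G.Adj a b) (e2 : G.Adj b c) (e3 : G.Adj c d) (e4 : G.Adj d a)
    (h1 : t s(c, d) ≤ t s(b, c)) (h2 : t s(d, a) ≤ t s(b, c)) :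
    s(a, b) ∈ R3 G t a ∧ s(b, c) ∈ R3 G t a ∧ s(c, d) ∈ R3 G t a ∧
      s(d, a) ∈ R3 G t a := by
  have hpath : ∀ e : Sym2 V, (e = s(a, d) ∨ e = s(d, c) ∨ e = s(c, b)) → e ∈ R3 G t a := by
    intro e he
    right; right
    refine ⟨d, c, b, had.symm, hac.symm, hab.symm, hcd.symm, hbd.symm, hbc.symm,
      e4.symm, e3.symm, e2.symm, ?_, ?_, he⟩
    · rwa [Sym2.eq_swap, show s(c, b) = s(b, c) from Sym2.eq_swap]
    · rwa [show s(a, d) = s(d, a) from Sym2.eq_swap, show s(c, b) = s(b, c) from Sym2.eq_swap]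
  refine ⟨?_, ?_, ?_, ?_⟩
  · exact Or.inl ⟨G.mem_edgeSet.2 e1, Sym2.mem_mk_left a b⟩
  · exact hpath _ (Or.inr (Or.inr Sym2.eq_swap))
  · exact hpath _ (Or.inr (Or.inl Sym2.eq_swap))
  · exact hpath _ (Or.inl Sym2.eq_swap)

/-- every 4-cycle of `G` is contained in the robust 3-hop neighborhood
of at least one of its vertices. -/
theorem fourCycle_covered_by_some_R3 {V : Type*} (G : SimpleGraph V) (t : Sym2 V → ℕ)
    (a b c d : V)
    (hab : a ≠ b) (hac : a ≠ c) (had : a ≠ d)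
    (hbc : b ≠ c) (hbd : b ≠ d) (hcd : c ≠ d)
    (e1 : G.Adj a b) (e2 : G.Adj b c) (e3 : G.Adj c d) (e4 : G.Adj d a) :
    ∃ v ∈ ({a, b, c, d} : Set V),
      s(a, b) ∈ R3 G t v ∧ s(b, c) ∈ R3 G t v ∧ s(c, d) ∈ R3 G t v ∧
        s(d, a) ∈ R3 G t v := by
  -- abbreviations for the four timestamps
  -- x1 = t s(a,b), x2 = t s(b,c), x3 = t s(c,d), x4 = t s(d,a)
  rcases le_total (t s(c, d)) (t s(b, c)) with h1 | h1
  · rcases le_total (t s(d, a)) (t s(b, c)) with h2 | h2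
    · -- t s(b,c) maximal: vertex a
      exact ⟨a, Or.inl rfl, key_R3 G t a b c d hab hac had hbc hbd hcd e1 e2 e3 e4 h1 h2⟩
    · rcases le_total (t s(a, b)) (t s(d, a)) with h3 | h3
      · -- t s(d,a) maximal: vertex c
        obtain ⟨p1, p2, p3, p4⟩ := key_R3 G t c d a b hcd hac.symm hbc.symm had.symm
          hbd.symm hab e3 e4 e1 e2 h3 h2
        exact ⟨c, Or.inr (Or.inr (Or.inl rfl)), p3, p4, p1, p2⟩
      · -- t s(a,b) maximal: vertex d
        obtain ⟨p1, p2, p3, p4⟩ := key_R3 G t d a b c had.symm hbd.symm hcd.symm hab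
          hac hbc e4 e1 e2 e3 (h2.trans h3) (h1.trans (h2.trans h3))
        exact ⟨d, Or.inr (Or.inr (Or.inr rfl)), p2, p3, p4, p1⟩
  · rcases le_total (t s(d, a)) (t s(c, d)) with h2 | h2
    · rcases le_total (t s(a, b)) (t s(c, d)) with h3 | h3
      · -- t s(c,d) maximal: vertex b
        obtain ⟨p1, p2, p3, p4⟩ := key_R3 G t b c d a hbc hbd hab.symm hcd
          hac.symm had.symm e2 e3 e4 e1 h2 h3
        exact ⟨b, Or.inr (Or.inl rfl), p4, p1, p2, p3⟩
      · -- t s(a,b) maximal: vertex d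
        obtain ⟨p1, p2, p3, p4⟩ := key_R3 G t d a b c had.symm hbd.symm hcd.symm hab
          hac hbc e4 e1 e2 e3 (h1.trans h3) h3
        exact ⟨d, Or.inr (Or.inr (Or.inr rfl)), p2, p3, p4, p1⟩
    · rcases le_total (t s(a, b)) (t s(d, a)) with h3 | h3
      · -- t s(d,a) maximal: vertex c
        obtain ⟨p1, p2, p3, p4⟩ := key_R3 G t c d a b hcd hac.symm hbc.symm had.symm
          hbd.symm hab e3 e4 e1 e2 h3 (h1.trans h2)
        exact ⟨c, Or.inr (Or.inr (Or.inl rfl)), p3, p4, p1, p2⟩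
      · -- t s(a,b) maximal: vertex d
        obtain ⟨p1, p2, p3, p4⟩ := key_R3 G t d a b c had.symm hbd.symm hcd.symm hab
          hac hbc e4 e1 e2 e3 (h1.trans (h2.trans h3)) (h2.trans h3)
        exact ⟨d, Or.inr (Or.inr (Or.inr rfl)), p2, p3, p4, p1⟩
end

section
/- Let G be a simple graph and t a timestamp function. For every 5-cycle of G on (a, b, c, d, e) there exists a vertex v ∈ {a,b,c,d,e} such that all five cycle edges {a,b}, {b,c}, {c,d}, {d,e}, {e,a} belong to R3(v). (This captures the guarantee of the paper's 5-cycle listing algorithm: every 5-cycle is seen in the robust 3-hop neighborhood of at least one of its vertices.) -/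
/-- If the edge `{c,d}` has maximal timestamp on the 5-cycle, then all five cycle
edges lie in `R3` of the opposite vertex `a`. -/
lemma cover_R3 {V : Type*} (G : SimpleGraph V) (t : Sym2 V → ℕ)
    (a b c d e : V)
    (hab : a ≠ b) (hac : a ≠ c) (had : a ≠ d) (hae : a ≠ e)
    (hbc : b ≠ c) (hbd : b ≠ d)
    (hcd : c ≠ d) (hce : c ≠ e) (hde : d ≠ e)
    (e1 : G.Adj a b) (e2 : G.Adj b c) (e3 : G.Adj c d) (e4 : G.Adj d e)
    (e5 : G.Adj e a)
    (h1 : t s(a, b) ≤ t s(c, d)) (h2 : t s(b, c) ≤ t s(c, d))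
    (h4 : t s(d, e) ≤ t s(c, d)) (h5 : t s(e, a) ≤ t s(c, d)) :
    s(a, b) ∈ R3 G t a ∧ s(b, c) ∈ R3 G t a ∧ s(c, d) ∈ R3 G t a ∧
      s(d, e) ∈ R3 G t a ∧ s(e, a) ∈ R3 G t a := by
  have fwd : ∀ ee : Sym2 V, (ee = s(a, b) ∨ ee = s(b, c) ∨ ee = s(c, d)) →
      ee ∈ R3 G t a := by
    intro ee hee
    exact Or.inr (Or.inr ⟨b, c, d, hab.symm, hac.symm, had.symm, hbc, hbd, hcd,
      e1, e2, e3, h2, h1, hee⟩)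
  have bwd : ∀ ee : Sym2 V, (ee = s(a, e) ∨ ee = s(e, d) ∨ ee = s(d, c)) →
      ee ∈ R3 G t a := by
    intro ee hee
    refine Or.inr (Or.inr ⟨e, d, c, hae.symm, had.symm, hac.symm, hde.symm,
      hce.symm, hcd.symm, e5.symm, e4.symm, e3.symm, ?_, ?_, hee⟩)
    · rw [show s(e, d) = s(d, e) from Sym2.eq_swap,
        show s(d, c) = s(c, d) from Sym2.eq_swap]; exact h4
    · rw [show s(a, e) = s(e, a) from Sym2.eq_swap,
        show s(d, c) = s(c, d) from Sym2.eq_swap]; exact h5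
  refine ⟨fwd _ (Or.inl rfl), fwd _ (Or.inr (Or.inl rfl)), fwd _ (Or.inr (Or.inr rfl)),
    ?_, ?_⟩
  · rw [show s(d, e) = s(e, d) from Sym2.eq_swap]
    exact bwd _ (Or.inr (Or.inl rfl))
  · rw [show s(e, a) = s(a, e) from Sym2.eq_swap]
    exact bwd _ (Or.inl rfl)

/-- every 5-cycle of `G` is contained in the robust 3-hop neighborhood
of at least one of its vertices. -/
theorem fiveCycle_covered_by_some_R3 {V : Type*} (G : SimpleGraph V) (t : Sym2 V → ℕ)
    (a b c d e : V)
    (hab : a ≠ b) (hac : a ≠ c) (had : a ≠ d) (hae : a ≠ e)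
    (hbc : b ≠ c) (hbd : b ≠ d) (hbe : b ≠ e)
    (hcd : c ≠ d) (hce : c ≠ e) (hde : d ≠ e)
    (e1 : G.Adj a b) (e2 : G.Adj b c) (e3 : G.Adj c d) (e4 : G.Adj d e)
    (e5 : G.Adj e a) :
    ∃ v ∈ ({a, b, c, d, e} : Set V),
      s(a, b) ∈ R3 G t v ∧ s(b, c) ∈ R3 G t v ∧ s(c, d) ∈ R3 G t v ∧
        s(d, e) ∈ R3 G t v ∧ s(e, a) ∈ R3 G t v := by
  set T1 := t s(a, b); set T2 := t s(b, c); set T3 := t s(c, d)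
  set T4 := t s(d, e); set T5 := t s(e, a)
  have hmax : (T1 ≤ T3 ∧ T2 ≤ T3 ∧ T4 ≤ T3 ∧ T5 ≤ T3) ∨
      (T2 ≤ T4 ∧ T3 ≤ T4 ∧ T5 ≤ T4 ∧ T1 ≤ T4) ∨
      (T3 ≤ T5 ∧ T4 ≤ T5 ∧ T1 ≤ T5 ∧ T2 ≤ T5) ∨
      (T4 ≤ T1 ∧ T5 ≤ T1 ∧ T2 ≤ T1 ∧ T3 ≤ T1) ∨
      (T5 ≤ T2 ∧ T1 ≤ T2 ∧ T3 ≤ T2 ∧ T4 ≤ T2) := by omega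
  rcases hmax with ⟨p, q, r, s⟩ | ⟨p, q, r, s⟩ | ⟨p, q, r, s⟩ | ⟨p, q, r, s⟩ |
    ⟨p, q, r, s⟩
  · obtain ⟨m1, m2, m3, m4, m5⟩ :=
      cover_R3 G t a b c d e hab hac had hae hbc hbd hcd hce hde e1 e2 e3 e4 e5 p q r s
    exact ⟨a, by simp, m1, m2, m3, m4, m5⟩
  · obtain ⟨m1, m2, m3, m4, m5⟩ :=
      cover_R3 G t b c d e a hbc hbd hbe hab.symm hcd hce hde had.symm hae.symm
        e2 e3 e4 e5 e1 p q r s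
    exact ⟨b, by simp, m5, m1, m2, m3, m4⟩
  · obtain ⟨m1, m2, m3, m4, m5⟩ :=
      cover_R3 G t c d e a b hcd hce hac.symm hbc.symm hde had.symm hae.symm
        hbe.symm hab e3 e4 e5 e1 e2 p q r s
    exact ⟨c, by simp, m4, m5, m1, m2, m3⟩
  · obtain ⟨m1, m2, m3, m4, m5⟩ :=
      cover_R3 G t d e a b c hde had.symm hbd.symm hcd.symm hae.symm hbe.symm
        hab hac hbc e4 e5 e1 e2 e3 p q r s
    exact ⟨d, by simp, m3, m4, m5, m1, m2⟩
  · obtain ⟨m1, m2, m3, m4, m5⟩ :=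
      cover_R3 G t e a b c d hae.symm hbe.symm hce.symm hde.symm hab hac
        hbc hbd hcd e5 e1 e2 e3 e4 p q r s
    exact ⟨e, by simp, m2, m3, m4, m5, m1⟩
end

section
/- Let G be a simple graph and t a timestamp function. For every triangle {a,b,c} of G there exists a vertex v ∈ {a,b,c} such that all three triangle edges {a,b}, {b,c}, {a,c} belong to R2(v). (Concretely, the vertex opposite an edge of maximal timestamp works; this is the guarantee underlying triangle listing via robust 2-hop neighborhoods.) -/
/-- The robust 2-hop neighborhood `R2(v)` of a vertex `v`: the edges `e` of `G` such
that either `v` is an endpoint of `e`, or some endpoint `u` of `e` satisfies that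
`{v,u}` is an edge of `G` and `t e ≥ t {v,u}`. -/
def R2 {V : Type*} (G : SimpleGraph V) (t : Sym2 V → ℕ) (v : V) : Set (Sym2 V) :=
  {e | e ∈ G.edgeSet ∧ (v ∈ e ∨ ∃ u : V, u ∈ e ∧ G.Adj v u ∧ t s(v, u) ≤ t e)}

/-- every triangle of `G` is contained in the robust 2-hop neighborhood
of at least one of its vertices. -/
theorem triangle_covered_by_some_R2 {V : Type*} (G : SimpleGraph V) (t : Sym2 V → ℕ)
    (a b c : V) (hab : a ≠ b) (hac : a ≠ c) (hbc : b ≠ c)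
    (e1 : G.Adj a b) (e2 : G.Adj b c) (e3 : G.Adj a c) :
    ∃ v ∈ ({a, b, c} : Set V),
      s(a, b) ∈ R2 G t v ∧ s(b, c) ∈ R2 G t v ∧ s(a, c) ∈ R2 G t v := by
  by_cases h : t s(a, b) ≤ t s(b, c)
  · refine ⟨a, by simp, ⟨e1, Or.inl (by simp)⟩,
      ⟨e2, Or.inr ⟨b, by simp, e1, h⟩⟩, ⟨e3, Or.inl (by simp)⟩⟩
  · refine ⟨c, by simp, ⟨e1, Or.inr ⟨b, by simp, e2.symm, ?_⟩⟩,
      ⟨e2, Or.inl (by simp)⟩, ⟨e3, Or.inl (by simp)⟩⟩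
    have : s(c, b) = s(b, c) := Sym2.eq_swap
    rw [this]; omega
end

section
/- Let G be a simple graph, t a timestamp function, and let (v, u, w, x) be a chordless 4-cycle of G (so {v,w} and {u,x} are not edges of G). If t({v,u}) < t({w,x}) < t({v,x}) < t({u,w}), then for every vertex z ∈ {v,u,w,x} at least one of the four cycle edges {v,u}, {u,w}, {w,x}, {x,v} does not belong to R2(z). In particular, this 4-cycle is not contained in the robust 2-hop neighborhood of any of its vertices. -/
/-- a chordless 4-cycle `(v,u,w,x)` with insertion order
`t{v,u} < t{w,x} < t{v,x} < t{u,w}` is not contained in the robust 2-hop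
neighborhood of any of its vertices. -/
theorem chordless_fourCycle_not_in_any_R2 {V : Type*} (G : SimpleGraph V)
    (t : Sym2 V → ℕ) (v u w x : V)
    (hvu : v ≠ u) (hvw : v ≠ w) (hvx : v ≠ x)
    (huw : u ≠ w) (hux : u ≠ x) (hwx : w ≠ x)
    (e1 : G.Adj v u) (e2 : G.Adj u w) (e3 : G.Adj w x) (e4 : G.Adj x v)
    (nc1 : ¬ G.Adj v w) (nc2 : ¬ G.Adj u x)
    (ht1 : t s(v, u) < t s(w, x)) (ht2 : t s(w, x) < t s(v, x))
    (ht3 : t s(v, x) < t s(u, w)) :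
    ∀ z ∈ ({v, u, w, x} : Set V),
      s(v, u) ∉ R2 G t z ∨ s(u, w) ∉ R2 G t z ∨ s(w, x) ∉ R2 G t z ∨
        s(x, v) ∉ R2 G t z := by
  intro z hz
  simp only [Set.mem_insert_iff, Set.mem_singleton_iff] at hz
  rcases hz with rfl | rfl | rfl | rfl
  · -- z = v : s(w,x) ∉ R2 v
    refine Or.inr (Or.inr (Or.inl ?_))
    rintro ⟨-, hmem | ⟨a, ha, hadj, hle⟩⟩
    · rw [Sym2.mem_iff] at hmem
      rcases hmem with rfl | rfl
      · exact hvw rfl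
      · exact hvx rfl
    · rw [Sym2.mem_iff] at ha
      rcases ha with rfl | rfl
      · exact nc1 hadj
      · exact absurd hle (not_le.mpr ht2)
  · -- z = u : s(w,x) ∉ R2 u
    refine Or.inr (Or.inr (Or.inl ?_))
    rintro ⟨-, hmem | ⟨a, ha, hadj, hle⟩⟩
    · rw [Sym2.mem_iff] at hmem
      rcases hmem with rfl | rfl
      · exact huw rfl
      · exact hux rfl
    · rw [Sym2.mem_iff] at ha
      rcases ha with rfl | rfl
      · exact absurd hle (not_le.mpr (ht2.trans ht3))
      · exact nc2 hadj
  · -- z = w : s(v,u) ∉ R2 w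
    refine Or.inl ?_
    rintro ⟨-, hmem | ⟨a, ha, hadj, hle⟩⟩
    · rw [Sym2.mem_iff] at hmem
      rcases hmem with rfl | rfl
      · exact hvw rfl
      · exact huw rfl
    · rw [Sym2.mem_iff] at ha
      rcases ha with rfl | rfl
      · exact nc1 hadj.symm
      · rw [show s(z,a) = s(a,z) from Sym2.eq_swap] at hle
        exact absurd hle (not_le.mpr (ht1.trans (ht2.trans ht3)))
  · -- z = x : s(v,u) ∉ R2 x
    refine Or.inl ?_
    rintro ⟨-, hmem | ⟨a, ha, hadj, hle⟩⟩
    · rw [Sym2.mem_iff] at hmem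
      rcases hmem with rfl | rfl
      · exact hvx rfl
      · exact hux rfl
    · rw [Sym2.mem_iff] at ha
      rcases ha with rfl | rfl
      · rw [show s(z,a) = s(a,z) from Sym2.eq_swap] at hle
        exact absurd hle (not_le.mpr (ht1.trans ht2))
      · exact nc2 hadj.symm
end
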